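/- arXiv:2005.06253 — 2 statements merged into one kernel-verified Lean document; each statement's English description precedes it below -/
import Mathlib

section
/- The subgroup T_a of the affine Weyl group W_a is a free abelian group with basis {ξ_{(α,1)} : α ∈ Π}; that is, the ξ_{(α,1)} for α ∈ Π pairwise commute and the homomorphism from the free abelian group ℤ^Π to W_a sending the α-th standard generator to ξ_{(α,1)} is injective with image T_a. -/
namespace NCLaurent

/-- Inner product on the lattice `ℤⁿ` (spanned by the orthonormal basis `ε_i`). -/
def ip {n : ℕ} (x y : Fin n → ℤ) : ℤ := ∑ i, x i * y i

/-- `⟨γ,β⟩ = 2(γ,β)/(β,β)` (exact for roots, where `(β,β) = 2`). -/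
def pairing {n : ℕ} (γ β : Fin n → ℤ) : ℤ := 2 * ip γ β / ip β β

/-- The orthonormal basis vector `ε_i`. -/
def eps (n : ℕ) (i : Fin n) : Fin n → ℤ := Pi.single i 1

/-- The root system `Δ = {ε_i − ε_j : i ≠ j}` of type `A_{n-1}`. -/
def Delta (n : ℕ) : Set (Fin n → ℤ) :=
  {v | ∃ i j : Fin n, i ≠ j ∧ v = eps n i - eps n j}

/-- The simple system `Π = {ε_i − ε_{i+1}}`. -/
def SimplePi (n : ℕ) : Set (Fin n → ℤ) :=
  {v | ∃ i j : Fin n, (j : ℕ) = (i : ℕ) + 1 ∧ v = eps n i - eps n j}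

lemma ip_sub_left {n} (x y z : Fin n → ℤ) : ip (x - y) z = ip x z - ip y z := by
  simp [ip, sub_mul, Finset.sum_sub_distrib]

lemma ip_smul_left {n} (c : ℤ) (x z : Fin n → ℤ) : ip (c • x) z = c * ip x z := by
  simp [ip, Finset.mul_sum, mul_assoc]

lemma pairing_eq {n} {β : Fin n → ℤ} (h : ip β β = 2) (x : Fin n → ℤ) :
    pairing x β = ip x β := by
  rw [pairing, h]
  exact Int.mul_ediv_cancel_left _ (by norm_num)

/-- The affine reflection `σ_{(β,m)}` of `Δ × ℤ` (extended to the ambient lattice),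
`σ_{(β,m)}(γ,k) = (σ_β γ, k − ⟨γ,β⟩ m)`. -/
def sigmaA {n : ℕ} (bm : (Fin n → ℤ) × ℤ) : Equiv.Perm ((Fin n → ℤ) × ℤ) :=
  if h : ip bm.1 bm.1 = 2 then
    Function.Involutive.toPerm
      (fun p => (p.1 - pairing p.1 bm.1 • bm.1, p.2 - pairing p.1 bm.1 * bm.2))
      (by
        intro p
        have key : ∀ x : Fin n → ℤ, pairing (x - pairing x bm.1 • bm.1) bm.1 = - pairing x bm.1 := by
          intro x
          rw [pairing_eq h, ip_sub_left, ip_smul_left, ← pairing_eq h x, h]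
          ring
        simp only
        refine Prod.ext ?_ ?_
        · simp only [key]
          abel_nf
          simp
        · simp only [key]
          ring)
  else 1

/-- `ξ_{β̇} = σ_{β̇} ∘ σ_{(β,0)}`. -/
def xi {n : ℕ} (bm : (Fin n → ℤ) × ℤ) : Equiv.Perm ((Fin n → ℤ) × ℤ) :=
  sigmaA bm * sigmaA (bm.1, 0)

/-- The affine Weyl group `W_a`, generated by all affine reflections `σ_{β̇}`, `β̇ ∈ Δ_a`. -/
def WaGrp (n : ℕ) : Subgroup (Equiv.Perm ((Fin n → ℤ) × ℤ)) :=
  Subgroup.closure {g | ∃ β : Fin n → ℤ, ∃ m : ℤ, β ∈ Delta n ∧ g = sigmaA (β, m)}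

/-- The finite Weyl group `W`, generated by the `σ_{(β,0)}`, `β ∈ Δ`. -/
def WGrp (n : ℕ) : Subgroup (Equiv.Perm ((Fin n → ℤ) × ℤ)) :=
  Subgroup.closure {g | ∃ β : Fin n → ℤ, β ∈ Delta n ∧ g = sigmaA (β, 0)}

/-- The translation subgroup `T_a`, generated by the `ξ_{β̇}`, `β̇ ∈ Δ_a`. -/
def TaGrp (n : ℕ) : Subgroup (Equiv.Perm ((Fin n → ℤ) × ℤ)) :=
  Subgroup.closure {g | ∃ β : Fin n → ℤ, ∃ m : ℤ, β ∈ Delta n ∧ g = xi (β, m)}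

lemma ip_eps_left {n} (i : Fin n) (v : Fin n → ℤ) : ip (eps n i) v = v i := by
  simp [ip, eps, Pi.single_apply]

lemma ip_sub_right {n} (x y z : Fin n → ℤ) : ip z (x - y) = ip z x - ip z y := by
  simp [ip, mul_sub, Finset.sum_sub_distrib]

lemma ip_smul_right {n} (c : ℤ) (x z : Fin n → ℤ) : ip z (c • x) = c * ip z x := by
  simp [ip, Finset.mul_sum]; ring_nf; simp [mul_comm, mul_left_comm]

lemma ip_zero_right {n} (z : Fin n → ℤ) : ip z 0 = 0 := by simp [ip]

/-- Translation permutation: `(γ,k) ↦ (γ, k + (γ,v))`. -/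
def tr {n : ℕ} (v : Fin n → ℤ) : Equiv.Perm ((Fin n → ℤ) × ℤ) where
  toFun p := (p.1, p.2 + ip p.1 v)
  invFun p := (p.1, p.2 - ip p.1 v)
  left_inv p := by simp
  right_inv p := by simp

lemma tr_apply {n} (v : Fin n → ℤ) (p) : tr v p = (p.1, p.2 + ip p.1 v) := rfl

lemma tr_add {n} (v w : Fin n → ℤ) : tr (v + w) = tr v * tr w := by
  ext p <;> simp [tr_apply, Equiv.Perm.mul_apply, ip, mul_add, Finset.sum_add_distrib] <;> ring

lemma tr_zero {n : ℕ} : tr (0 : Fin n → ℤ) = 1 := by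
  ext p <;> simp [tr_apply, ip_zero_right]

lemma tr_inj {n} : Function.Injective (tr (n := n)) := by
  intro v w h
  funext i
  have := congrArg (fun e : Equiv.Perm ((Fin n → ℤ) × ℤ) => (e (eps n i, 0)).2) h
  simpa [tr_apply, ip_eps_left] using this
lemma ip_root {n} {i j : Fin n} (hij : i ≠ j) :
    ip (eps n i - eps n j) (eps n i - eps n j) = 2 := by
  rw [ip_sub_left, ip_eps_left, ip_eps_left]
  simp [eps, Pi.single_apply, hij, hij.symm]

lemma xi_eq {n} (β : Fin n → ℤ) (m : ℤ) (h : ip β β = 2) :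
    xi (β, m) = tr (m • β) := by
  apply Equiv.ext
  intro p
  simp only [xi, Equiv.Perm.mul_apply, sigmaA, dif_pos h, tr_apply,
    Function.Involutive.coe_toPerm]
  change ((fun p : (Fin n → ℤ) × ℤ => (p.1 - pairing p.1 β • β, p.2 - pairing p.1 β * m))
    ((fun p : (Fin n → ℤ) × ℤ => (p.1 - pairing p.1 β • β, p.2 - pairing p.1 β * 0)) p)) = _
  simp only [pairing_eq h, ip_sub_left, ip_smul_left, h]
  refine Prod.ext ?_ ?_
  · funext x
    simp only [Pi.sub_apply, Pi.smul_apply, smul_eq_mul]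
    ring
  · simp only [ip_smul_right]
    ring
/-- The additive hom `ℤ^Π → ℤⁿ`, `f ↦ ∑ f(α) • α`. -/
noncomputable def Lmap (n : ℕ) : ((SimplePi n) →₀ ℤ) →+ (Fin n → ℤ) :=
  Finsupp.liftAddHom fun α => zmultiplesHom (Fin n → ℤ) (α : Fin n → ℤ)

lemma Lmap_single {n} (α : SimplePi n) (c : ℤ) :
    Lmap n (Finsupp.single α c) = c • (α : Fin n → ℤ) := by
  simp [Lmap]

/-- The monoid hom `ℤ^Π → Perm`. -/
noncomputable def phiHom (n : ℕ) :
    Multiplicative ((SimplePi n) →₀ ℤ) →* Equiv.Perm ((Fin n → ℤ) × ℤ) :=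
  MonoidHom.mk' (fun f => tr (Lmap n (Multiplicative.toAdd f)))
    (by intro a b; simp only [toAdd_mul, map_add, tr_add])

lemma phiHom_apply {n} (f) : phiHom n f = tr (Lmap n (Multiplicative.toAdd f)) := rfl

/-- The partial-sum functional `ψ_i(v) = ∑_{j ≤ i} v_j`. -/
def psiA {n : ℕ} (i : Fin n) : (Fin n → ℤ) →+ ℤ where
  toFun v := ∑ j, if j ≤ i then v j else 0
  map_zero' := by simp
  map_add' x y := by
    have h : ∀ j, (if j ≤ i then (x + y) j else 0)
        = (if j ≤ i then x j else 0) + (if j ≤ i then y j else 0) := by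
      intro j; by_cases h : j ≤ i <;> simp [h]
    simp only [h, Finset.sum_add_distrib]

lemma psiA_eps {n} (i k : Fin n) : psiA i (eps n k) = if k ≤ i then 1 else 0 := by
  simp only [psiA, AddMonoidHom.coe_mk, ZeroHom.coe_mk]
  rw [Finset.sum_eq_single k]
  · simp [eps]
  · intro j _ hj
    simp [eps, Pi.single_apply, hj]
  · simp
lemma psiA_mem {n} {α β : SimplePi n} {i j : Fin n} (hj : (j : ℕ) = (i : ℕ) + 1)
    (hα : (α : Fin n → ℤ) = eps n i - eps n j) :
    psiA i (β : Fin n → ℤ) = if β = α then 1 else 0 := by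
  obtain ⟨i', j', hj', hv⟩ := β.2
  rw [show (β : Fin n → ℤ) = eps n i' - eps n j' from hv, map_sub, psiA_eps, psiA_eps]
  by_cases hii : i' = i
  · have hjj : j' = j := Fin.ext (by omega)
    have hβα : β = α := Subtype.ext (by rw [hv, hα, hii, hjj])
    rw [if_pos hβα, hii, hjj]
    simp only [Fin.le_def]
    split_ifs <;> omega
  · have hne : β ≠ α := by
      intro h
      apply hii
      have hval : eps n i' - eps n j' = eps n i - eps n j := by rw [← hv, ← hα, h]
      have h2 := congrFun hval i'
      simp only [Pi.sub_apply, eps, Pi.single_apply, Fin.ext_iff] at h2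
      exact Fin.ext (by split_ifs at h2 <;> omega)
    rw [if_neg hne]
    have hvv : (i' : ℕ) ≠ (i : ℕ) := fun h => hii (Fin.ext h)
    simp only [Fin.le_def]
    split_ifs <;> omega

lemma Lmap_eq_zero {n} {f : (SimplePi n) →₀ ℤ} (hf : Lmap n f = 0) : f = 0 := by
  ext α
  obtain ⟨i, j, hj, hv⟩ := α.2
  have h1 : psiA i (Lmap n f) = 0 := by rw [hf, map_zero]
  rw [Lmap, Finsupp.liftAddHom_apply, map_finsuppSum] at h1
  have h2 : ∀ β : SimplePi n, ∀ c : ℤ,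
      psiA i ((zmultiplesHom (Fin n → ℤ) (β : Fin n → ℤ)) c) = if β = α then c else 0 := by
    intro β c
    rw [zmultiplesHom_apply, map_zsmul, smul_eq_mul, psiA_mem hj hv]
    split_ifs <;> ring
  have h3 : (f.sum fun β c => psiA i ((zmultiplesHom (Fin n → ℤ) (β : Fin n → ℤ)) c))
      = f.sum fun β c => if β = α then c else 0 :=
    Finsupp.sum_congr fun β _ => h2 β (f β)
  rw [h3, Finsupp.sum_ite_self_eq'] at h1
  simp [h1]

lemma Lmap_injective {n} : Function.Injective (Lmap n) := by
  intro f g h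
  have h0 : Lmap n (f - g) = 0 := by rw [map_sub, h, sub_self]
  exact sub_eq_zero.mp (Lmap_eq_zero h0)
lemma simple_ne {n} {i j : Fin n} (hj : (j : ℕ) = (i : ℕ) + 1) : i ≠ j := by
  intro h; rw [h] at hj; omega

lemma simple_mem_Delta {n} (α : SimplePi n) : (α : Fin n → ℤ) ∈ Delta n := by
  obtain ⟨i, j, hj, hv⟩ := α.2
  exact ⟨i, j, simple_ne hj, hv⟩

lemma simple_ip {n} (α : SimplePi n) : ip (α : Fin n → ℤ) (α : Fin n → ℤ) = 2 := by
  obtain ⟨i, j, hj, hv⟩ := α.2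
  rw [hv]; exact ip_root (simple_ne hj)

lemma tr_L_mem {n} (f : (SimplePi n) →₀ ℤ) : tr (Lmap n f) ∈ TaGrp n := by
  induction f using Finsupp.induction with
  | zero => rw [map_zero, tr_zero]; exact Subgroup.one_mem _
  | single_add α b f _ _ ih =>
    rw [map_add, tr_add, Lmap_single]
    refine Subgroup.mul_mem _ ?_ ih
    rw [← xi_eq _ b (simple_ip α)]
    exact Subgroup.subset_closure ⟨α, b, simple_mem_Delta α, rfl⟩

lemma exists_L {n : ℕ} (i j : Fin n) : ∃ f, Lmap n f = eps n i - eps n j := by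
  have h0 : 0 < n := i.pos
  have key : ∀ k : ℕ, ∀ h : k < n, ∃ f, Lmap n f = eps n ⟨0, h0⟩ - eps n ⟨k, h⟩ := by
    intro k
    induction k with
    | zero => intro h; exact ⟨0, by rw [map_zero, sub_self]⟩
    | succ k ih =>
      intro h
      have hk : k < n := by omega
      obtain ⟨f, hf⟩ := ih hk
      refine ⟨f + Finsupp.single ⟨eps n ⟨k, hk⟩ - eps n ⟨k + 1, h⟩,
        ⟨⟨k, hk⟩, ⟨k + 1, h⟩, rfl, rfl⟩⟩ 1, ?_⟩
      rw [map_add, hf, Lmap_single, one_smul]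
      exact sub_add_sub_cancel _ _ _
  obtain ⟨fi, hfi⟩ := key (i : ℕ) i.isLt
  obtain ⟨fj, hfj⟩ := key (j : ℕ) j.isLt
  simp only [Fin.eta] at hfi hfj
  refine ⟨fj - fi, ?_⟩
  rw [map_sub, hfi, hfj]
  abel


/-- `T_a` is free abelian with basis `{ξ_{(α,1)} : α ∈ Π}`:
the `ξ_{(α,1)}` pairwise commute, and the homomorphism from the free abelian group
`ℤ^Π` to `W_a` sending the `α`-th standard generator to `ξ_{(α,1)}` is injective
with image `T_a`. -/
theorem statement_1 (n : ℕ) (hn : 2 ≤ n) :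
    (∀ α ∈ SimplePi n, ∀ α' ∈ SimplePi n, Commute (xi (α, 1)) (xi (α', 1))) ∧
    ∃ φ : Multiplicative ((SimplePi n) →₀ ℤ) →* Equiv.Perm ((Fin n → ℤ) × ℤ),
      (∀ α : SimplePi n,
        φ (Multiplicative.ofAdd (Finsupp.single α (1 : ℤ))) = xi ((α : Fin n → ℤ), 1)) ∧
      Function.Injective φ ∧ φ.range = TaGrp n := by
  constructor
  · rintro α ⟨i, j, hj, rfl⟩ α' ⟨i', j', hj', rfl⟩
    have h1 := ip_root (simple_ne hj)
    have h2 := ip_root (simple_ne hj')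
    show _ * _ = _ * _
    rw [xi_eq _ _ h1, xi_eq _ _ h2, ← tr_add, ← tr_add, add_comm]
  · refine ⟨phiHom n, ?_, ?_, ?_⟩
    · intro α
      rw [phiHom_apply, toAdd_ofAdd, Lmap_single, xi_eq _ _ (simple_ip α)]
    · intro f g h
      rw [phiHom_apply, phiHom_apply] at h
      exact Multiplicative.toAdd.injective (Lmap_injective (tr_inj h))
    · apply le_antisymm
      · rintro x ⟨f, rfl⟩
        exact (phiHom_apply f) ▸ tr_L_mem (Multiplicative.toAdd f)
      · rw [TaGrp, Subgroup.closure_le]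
        rintro x ⟨β, m, ⟨i, j, hij, rfl⟩, rfl⟩
        obtain ⟨f, hf⟩ := exists_L i j
        refine ⟨Multiplicative.ofAdd (m • f), ?_⟩
        rw [phiHom_apply, toAdd_ofAdd, map_zsmul, hf,
          ← xi_eq _ _ (ip_root hij)]

end NCLaurent
end

section
/- For every α̇ in the affine simple system Π_a, the group U^± is the internal semidirect product of U'_{±α̇} by U_{±α̇}: U_{±α̇} normalizes U'_{±α̇}, U'_{±α̇} ∩ U_{±α̇} = {I}, and U'_{±α̇}·U_{±α̇} = U^±. -/
namespace NCLaurent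


/-- `A` is the ring `D_τ = D[t,t⁻¹]` of skew Laurent polynomials over the division
ring `D` twisted by `τ`: it contains `D` via `ι`, has a unit `t` with `t a t⁻¹ = τ a`,
and the powers of `t` form a basis of `A` as a left `D`-module. -/
structure IsSkewLaurent {D A : Type} [DivisionRing D] [Ring A]
    (τ : D ≃+* D) (ι : D →+* A) (t : Aˣ) : Prop where
  injective : Function.Injective ι
  conj_eq : ∀ a : D, (t : A) * ι a * ((t⁻¹ : Aˣ) : A) = ι (τ a)
  repr_unique : ∀ x : A, ∃! c : ℤ →₀ D, x = c.sum fun k a => ι a * ((t ^ k : Aˣ) : A)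

variable {D A : Type} [DivisionRing D] [Ring A]

/-- The elementary matrix `e_{ij}(f) = I + f·E_{ij}` as an element of `GL(n, A)`. -/
def elemUnit {n : ℕ} (i j : Fin n) (hij : i ≠ j) (f : A) : (Matrix (Fin n) (Fin n) A)ˣ where
  val := 1 + Matrix.single i j f
  inv := 1 - Matrix.single i j f
  val_inv := by
    have h : Matrix.single i j f * Matrix.single i j f = 0 :=
      Matrix.single_mul_single_of_ne (c := f) i j i hij.symm f
    rw [mul_sub, mul_one, add_mul, one_mul, h]
    abel
  inv_val := by
    have h : Matrix.single i j f * Matrix.single i j f = 0 :=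
      Matrix.single_mul_single_of_ne (c := f) i j i hij.symm f
    rw [mul_add, mul_one, sub_mul, one_mul, h]
    abel

variable (ι : D →+* A) (t : Aˣ)

/-- `x_{β̇}(f)` for the affine root `β̇ = (ε_i − ε_j, m)` and `f ∈ D`. -/
def xRoot {n : ℕ} (i j : Fin n) (hij : i ≠ j) (m : ℤ) (f : D) : (Matrix (Fin n) (Fin n) A)ˣ :=
  if i < j then elemUnit i j hij (ι f * ((t ^ m : Aˣ) : A))
  else elemUnit i j hij (((t ^ m : Aˣ) : A) * ι f)

/-- `w_{β̇}(u) = x_{β̇}(u)·x_{−β̇}(−u⁻¹)·x_{β̇}(u)` for `u ∈ D^×`. -/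
def wRoot {n : ℕ} (i j : Fin n) (hij : i ≠ j) (m : ℤ) (u : Dˣ) : (Matrix (Fin n) (Fin n) A)ˣ :=
  xRoot ι t i j hij m (u : D) * xRoot ι t j i hij.symm (-m) (-((u⁻¹ : Dˣ) : D)) *
    xRoot ι t i j hij m (u : D)

/-- `h_{β̇}(u) = w_{β̇}(u)·w_{(β,0)}(−1)`. -/
def hRoot {n : ℕ} (i j : Fin n) (hij : i ≠ j) (m : ℤ) (u : Dˣ) : (Matrix (Fin n) (Fin n) A)ˣ :=
  wRoot ι t i j hij m u * wRoot ι t i j hij 0 (-1)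

/-- Membership of `(ε_i − ε_j, m)` in `Δ_a⁺ = (Δ⁺ × ℤ_{≥0}) ∪ (Δ⁻ × ℤ_{>0})`. -/
def AffPos {n : ℕ} (i j : Fin n) (m : ℤ) : Prop := (i < j ∧ 0 ≤ m) ∨ (j < i ∧ 0 < m)

/-- Membership of `(ε_i − ε_j, m)` in `Δ_a⁻ = (Δ⁺ × ℤ_{<0}) ∪ (Δ⁻ × ℤ_{≤0})`. -/
def AffNeg {n : ℕ} (i j : Fin n) (m : ℤ) : Prop := (i < j ∧ m < 0) ∨ (j < i ∧ m ≤ 0)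

/-- `(ε_i − ε_j, m)` belongs to the affine simple system
`Π_a = {(α_i, 0)} ∪ {(−θ, 1)}`. -/
def SimpleAff (n : ℕ) (i j : Fin n) (m : ℤ) : Prop :=
  ((j : ℕ) = (i : ℕ) + 1 ∧ m = 0) ∨ ((i : ℕ) = n - 1 ∧ (j : ℕ) = 0 ∧ m = 1)

/-- `U⁺` (for `pos = true`) resp. `U⁻` (for `pos = false`). -/
def Ugrp (n : ℕ) (pos : Bool) : Subgroup (Matrix (Fin n) (Fin n) A)ˣ :=
  Subgroup.closure {g | ∃ (i j : Fin n) (hij : i ≠ j) (m : ℤ) (f : D),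
    (if pos then AffPos i j m else AffNeg i j m) ∧ g = xRoot ι t i j hij m f}

/-- The subgroup `N` generated by all `w_{β̇}(u)`. -/
def Ngrp (n : ℕ) : Subgroup (Matrix (Fin n) (Fin n) A)ˣ :=
  Subgroup.closure {g | ∃ (i j : Fin n) (hij : i ≠ j) (m : ℤ) (u : Dˣ),
    g = wRoot ι t i j hij m u}

/-- The subgroup `T` generated by all `h_{β̇}(u)`. -/
def Tgrp (n : ℕ) : Subgroup (Matrix (Fin n) (Fin n) A)ˣ :=
  Subgroup.closure {g | ∃ (i j : Fin n) (hij : i ≠ j) (m : ℤ) (u : Dˣ),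
    g = hRoot ι t i j hij m u}

/-- `T₀`: the subgroup generated by the elements of `T` all of whose diagonal
entries have `t`-degree `0`, i.e. lie in `ι(D^×)`. -/
def T0grp (n : ℕ) : Subgroup (Matrix (Fin n) (Fin n) A)ˣ :=
  Subgroup.closure {h | h ∈ Tgrp ι t n ∧
    ∀ i : Fin n, ∃ s : D, s ≠ 0 ∧ (h : (Matrix (Fin n) (Fin n) A)ˣ).val i i = ι s}

/-- `B⁺ = ⟨U⁺, T₀⟩` resp. `B⁻ = ⟨U⁻, T₀⟩`. -/
def Bgrp (n : ℕ) (pos : Bool) : Subgroup (Matrix (Fin n) (Fin n) A)ˣ :=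
  Ugrp ι t n pos ⊔ T0grp ι t n

/-- The elementary group `E(n, D_τ)`, generated by all `x_{β̇}(f)`, `β̇ ∈ Δ_a`, `f ∈ D`. -/
def Egrp (n : ℕ) : Subgroup (Matrix (Fin n) (Fin n) A)ˣ :=
  Subgroup.closure {g | ∃ (i j : Fin n) (hij : i ≠ j) (m : ℤ) (f : D),
    g = xRoot ι t i j hij m f}

/-- The elementary group `E(n, D_τ)`, generated by the `I + f·E_{ij}`, `f ∈ D_τ`. -/
def EgrpL (n : ℕ) : Subgroup (Matrix (Fin n) (Fin n) A)ˣ :=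
  Subgroup.closure {g | ∃ (i j : Fin n) (hij : i ≠ j) (f : A), g = elemUnit i j hij f}

/-- The subgroup `U'_{β̇}` (for either sign, according to `pos`). -/
def Uprime {n : ℕ} (i j : Fin n) (hij : i ≠ j) (m : ℤ) (pos : Bool) :
    Subgroup (Matrix (Fin n) (Fin n) A)ˣ :=
  Subgroup.closure {h | ∃ (g f : D) (k l : Fin n) (hkl : k ≠ l) (m' : ℤ),
    (if pos then AffPos k l m' else AffNeg k l m') ∧ ¬(k = i ∧ l = j ∧ m' = m) ∧
    h = xRoot ι t i j hij m g * xRoot ι t k l hkl m' f * (xRoot ι t i j hij m g)⁻¹}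

/-- The root subgroup `U_{β̇} = {x_{β̇}(f) : f ∈ D}`. -/
def UrootSet {n : ℕ} (i j : Fin n) (hij : i ≠ j) (m : ℤ) :
    Set (Matrix (Fin n) (Fin n) A)ˣ :=
  {g | ∃ f : D, g = xRoot ι t i j hij m f}



section Aux
variable {τ : D ≃+* D}
variable {ι t}

/-- The additive map sending a finsupp to the corresponding Laurent sum. -/
noncomputable def reprHom (ι : D →+* A) (t : Aˣ) : (ℤ →₀ D) →+ A :=
  Finsupp.liftAddHom fun k => (AddMonoidHom.mulRight ((t ^ k : Aˣ) : A)).comp ι.toAddMonoidHom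

lemma reprHom_single (k : ℤ) (a : D) : reprHom ι t (Finsupp.single k a) = ι a * ((t ^ k : Aˣ) : A) :=
  Finsupp.liftAddHom_apply_single _ _ _

lemma reprHom_apply (c : ℤ →₀ D) : reprHom ι t c = c.sum fun k a => ι a * ((t ^ k : Aˣ) : A) := by
  classical
  induction c using Finsupp.induction with
  | zero => simp
  | single_add k a c hk ha ih =>
      rw [map_add, Finsupp.sum_add_index, ih, reprHom_single]
      · rw [Finsupp.sum_single_index (by simp)]
      · intro; simp
      · intros; simp [add_mul]

lemma reprHom_bij (hA : IsSkewLaurent τ ι t) : Function.Bijective (reprHom ι t (D := D)) := by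
  constructor
  · intro c d h
    obtain ⟨e, he, hu⟩ := hA.repr_unique (reprHom ι t c)
    rw [hu c (reprHom_apply c), hu d (h.trans (reprHom_apply d))]
  · intro x
    obtain ⟨c, hc, -⟩ := hA.repr_unique x
    exact ⟨c, by rw [reprHom_apply, ← hc]⟩

/-- Coefficient extraction. -/
noncomputable def coeffE (hA : IsSkewLaurent τ ι t) : A ≃+ (ℤ →₀ D) :=
  (AddEquiv.ofBijective (reprHom ι t) (reprHom_bij hA)).symm

lemma coeffE_basis (hA : IsSkewLaurent τ ι t) (k : ℤ) (a : D) :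
    coeffE hA (ι a * ((t ^ k : Aˣ) : A)) = Finsupp.single k a := by
  rw [← reprHom_single (t := t) k a]
  exact (AddEquiv.ofBijective (reprHom ι t) (reprHom_bij hA)).symm_apply_apply _


lemma t_mul_iota (hA : IsSkewLaurent τ ι t) (a : D) :
    (t : A) * ι a = ι (τ a) * (t : A) := by
  have := hA.conj_eq a
  calc (t : A) * ι a = ((t : A) * ι a * ((t⁻¹ : Aˣ) : A)) * (t : A) := by
        rw [mul_assoc, Units.inv_mul, mul_one]
    _ = ι (τ a) * (t : A) := by rw [this]

lemma tinv_mul_iota (hA : IsSkewLaurent τ ι t) (a : D) :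
    ((t⁻¹ : Aˣ) : A) * ι a = ι (τ.symm a) * ((t⁻¹ : Aˣ) : A) := by
  have h := t_mul_iota hA (τ.symm a)
  rw [RingEquiv.apply_symm_apply] at h
  have : ((t⁻¹ : Aˣ) : A) * (ι a * (t : A)) * ((t⁻¹ : Aˣ) : A)
      = ((t⁻¹ : Aˣ) : A) * ((t : A) * ι (τ.symm a)) * ((t⁻¹ : Aˣ) : A) := by rw [h]
  rw [← mul_assoc, ← mul_assoc, Units.inv_mul, one_mul] at this
  rw [mul_assoc, mul_assoc, Units.mul_inv, mul_one] at this
  exact this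

/-- `t^k · ι a = ι (τ^k a) · t^k` for all integers `k`. -/
lemma tpow_mul_iota (hA : IsSkewLaurent τ ι t) (k : ℤ) (a : D) :
    ((t ^ k : Aˣ) : A) * ι a = ι (((τ ^ k : D ≃+* D)) a) * ((t ^ k : Aˣ) : A) := by
  induction k using Int.induction_on generalizing a with
  | zero => simp only [zpow_zero, Units.val_one, one_mul, mul_one]; rfl
  | succ k ih =>
      have h1 : t ^ ((k : ℤ) + 1) = t ^ (k : ℤ) * t := by rw [zpow_add_one]
      have h2 : (τ ^ ((k : ℤ) + 1) : D ≃+* D) a = (τ ^ (k : ℤ) : D ≃+* D) (τ a) := by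
        rw [zpow_add_one]; rfl
      rw [h1, Units.val_mul, mul_assoc, t_mul_iota hA, ← mul_assoc, ih (τ a), h2, mul_assoc]
  | pred k ih =>
      have h1 : t ^ (-(k : ℤ) - 1) = t ^ (-(k : ℤ)) * t⁻¹ := by rw [zpow_sub_one]
      have h2 : (τ ^ (-(k : ℤ) - 1) : D ≃+* D) a = (τ ^ (-(k : ℤ)) : D ≃+* D) (τ.symm a) := by
        rw [zpow_sub_one]; rfl
      rw [h1, Units.val_mul, mul_assoc, tinv_mul_iota hA, ← mul_assoc, ih (τ.symm a), h2, mul_assoc]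


/-- Degree condition: for `s = true`, degrees `≥ p`; for `s = false`, degrees `≤ -p`. -/
def dok (s : Bool) (p k : ℤ) : Prop := if s then p ≤ k else k ≤ -p

lemma dok_add {s : Bool} {p q k l : ℤ} (h1 : dok s p k) (h2 : dok s q l) :
    dok s (p + q) (k + l) := by
  cases s <;> simp [dok] at * <;> omega

lemma dok_mono {s : Bool} {p p' k : ℤ} (h : p' ≤ p) (h1 : dok s p k) : dok s p' k := by
  cases s <;> simp [dok] at * <;> omega

lemma dok_zero (s : Bool) : dok s 0 0 := by cases s <;> simp [dok]

lemma not_dok {s : Bool} {p : ℤ} : ¬ dok s (p + 1) (if s then p else -p) := by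
  cases s <;> simp [dok]

/-- The filtration subgroup of `A` spanned by `ι a · t^k` with `dok s p k`. -/
def Afil (ι : D →+* A) (t : Aˣ) (s : Bool) (p : ℤ) : AddSubgroup A :=
  AddSubgroup.closure {x | ∃ a k, dok s p k ∧ x = ι a * ((t ^ k : Aˣ) : A)}

lemma basis_mem_afil {s : Bool} {p k : ℤ} (h : dok s p k) (a : D) :
    ι a * ((t ^ k : Aˣ) : A) ∈ Afil ι t s p :=
  AddSubgroup.subset_closure ⟨a, k, h, rfl⟩

lemma basis_mem_afil' (hA : IsSkewLaurent τ ι t) {s : Bool} {p k : ℤ} (h : dok s p k) (a : D) :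
    ((t ^ k : Aˣ) : A) * ι a ∈ Afil ι t s p := by
  rw [tpow_mul_iota hA]; exact basis_mem_afil h _

lemma afil_mono {s : Bool} {p p' : ℤ} (h : p' ≤ p) : Afil ι t s p ≤ Afil ι t s p' := by
  apply AddSubgroup.closure_le (Afil ι t s p') |>.mpr
  rintro x ⟨a, k, hk, rfl⟩
  exact basis_mem_afil (dok_mono h hk) a

lemma one_mem_afil {s : Bool} {p : ℤ} (h : p ≤ 0) : (1 : A) ∈ Afil ι t s p := by
  have := basis_mem_afil (ι := ι) (t := t) (dok_mono h (dok_zero s)) 1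
  simpa using this

lemma afil_mul {s : Bool} {p q : ℤ} {x y : A} (hA : IsSkewLaurent τ ι t)
    (hx : x ∈ Afil ι t s p) (hy : y ∈ Afil ι t s q) : x * y ∈ Afil ι t s (p + q) := by
  induction hx using AddSubgroup.closure_induction with
  | mem x hx =>
    obtain ⟨a, k, hk, rfl⟩ := hx
    induction hy using AddSubgroup.closure_induction with
    | mem y hy =>
        obtain ⟨b, l, hl, rfl⟩ := hy
        have : ι a * ((t ^ k : Aˣ) : A) * (ι b * ((t ^ l : Aˣ) : A))
            = ι (a * (τ ^ k : D ≃+* D) b) * ((t ^ (k + l) : Aˣ) : A) := by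
          rw [mul_assoc, ← mul_assoc ((t ^ k : Aˣ) : A), tpow_mul_iota hA, map_mul,
            mul_assoc, mul_assoc, ← Units.val_mul, ← zpow_add]
        rw [this]
        exact basis_mem_afil (dok_add hk hl) _
    | zero => simpa using zero_mem (Afil ι t s (p + q))
    | add y z hy hz ihy ihz => rw [mul_add]; exact add_mem ihy ihz
    | neg y hy ihy => rw [mul_neg]; exact neg_mem ihy
  | zero => simpa using zero_mem (Afil ι t s (p + q))
  | add x z hx hz ihx ihz => rw [add_mul]; exact add_mem ihx ihz
  | neg x hx ihx => rw [neg_mul]; exact neg_mem ihx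

lemma afil_coeff_eq_zero (hA : IsSkewLaurent τ ι t) {s : Bool} {p : ℤ} {x : A}
    (hx : x ∈ Afil ι t s p) {k : ℤ} (hk : ¬ dok s p k) : coeffE hA x k = 0 := by
  induction hx using AddSubgroup.closure_induction with
  | mem x hx =>
      obtain ⟨a, l, hl, rfl⟩ := hx
      rw [coeffE_basis hA]
      rw [Finsupp.single_apply]
      have : l ≠ k := fun h => hk (h ▸ hl)
      simp [this]
  | zero => simp
  | add x y hx hy ihx ihy => rw [map_add]; simp [Finsupp.add_apply, ihx, ihy]
  | neg x hx ihx => rw [map_neg]; simp [Finsupp.neg_apply, ihx]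

lemma coeff_basis_self (hA : IsSkewLaurent τ ι t) (m : ℤ) (f : D) :
    coeffE hA (ι f * ((t ^ m : Aˣ) : A)) m = f := by
  rw [coeffE_basis hA]; exact Finsupp.single_eq_same

lemma coeff_basis_self' (hA : IsSkewLaurent τ ι t) (m : ℤ) (f : D) :
    coeffE hA (((t ^ m : Aˣ) : A) * ι f) m = (τ ^ m : D ≃+* D) f := by
  rw [tpow_mul_iota hA, coeffE_basis hA]; exact Finsupp.single_eq_same


/-- Matrices that are "unipotent triangular modulo higher filtration". -/
def Mset (ι : D →+* A) (t : Aˣ) (s : Bool) (n : ℕ) : Set (Matrix (Fin n) (Fin n) A) :=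
  {g | (∀ k l, g k l ∈ Afil ι t s 0) ∧
    (∀ k l : Fin n, (if s then l < k else k < l) → g k l ∈ Afil ι t s 1) ∧
    (∀ k, g k k - 1 ∈ Afil ι t s 1)}

lemma mset_one {s : Bool} {n : ℕ} : (1 : Matrix (Fin n) (Fin n) A) ∈ Mset ι t s n := by
  refine ⟨fun k l => ?_, fun k l h => ?_, fun k => ?_⟩
  · by_cases hkl : k = l
    · subst hkl; rw [Matrix.one_apply_eq]; exact one_mem_afil le_rfl
    · rw [Matrix.one_apply_ne hkl]; exact zero_mem _
  · have hkl : k ≠ l := by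
      cases s
      · simp at h; exact ne_of_lt h
      · simp at h; exact ne_of_gt h
    rw [Matrix.one_apply_ne hkl]; exact zero_mem _
  · rw [Matrix.one_apply_eq, sub_self]; exact zero_mem _

lemma mset_term_strict (hA : IsSkewLaurent τ ι t) {s : Bool} {n : ℕ}
    {a b : Matrix (Fin n) (Fin n) A} (ha : a ∈ Mset ι t s n) (hb : b ∈ Mset ι t s n)
    {k l : Fin n} (h : if s then l < k else k < l) (r : Fin n) :
    a k r * b r l ∈ Afil ι t s 1 := by
  obtain ⟨ha0, ha1, -⟩ := ha
  obtain ⟨hb0, hb1, -⟩ := hb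
  cases s with
  | true =>
      simp at h ha1 hb1
      rcases lt_or_ge l r with hr | hr
      · have : (1 : ℤ) = 0 + 1 := by ring
        rw [this]; exact afil_mul hA (ha0 k r) (hb1 r l hr)
      · have hrk : r < k := lt_of_le_of_lt hr h
        have : (1 : ℤ) = 1 + 0 := by ring
        rw [this]; exact afil_mul hA (ha1 k r hrk) (hb0 r l)
  | false =>
      simp at h ha1 hb1
      rcases lt_or_ge r l with hr | hr
      · have : (1 : ℤ) = 0 + 1 := by ring
        rw [this]; exact afil_mul hA (ha0 k r) (hb1 r l hr)
      · have hrk : k < r := lt_of_lt_of_le h hr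
        have : (1 : ℤ) = 1 + 0 := by ring
        rw [this]; exact afil_mul hA (ha1 k r hrk) (hb0 r l)

lemma mset_term_offdiag (hA : IsSkewLaurent τ ι t) {s : Bool} {n : ℕ}
    {a b : Matrix (Fin n) (Fin n) A} (ha : a ∈ Mset ι t s n) (hb : b ∈ Mset ι t s n)
    {k r : Fin n} (h : r ≠ k) : a k r * b r k ∈ Afil ι t s 1 := by
  obtain ⟨ha0, ha1, -⟩ := ha
  obtain ⟨hb0, hb1, -⟩ := hb
  rcases lt_or_gt_of_ne h with hr | hr
  · cases s with
    | true =>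
        have : (1 : ℤ) = 1 + 0 := by ring
        rw [this]; exact afil_mul hA (ha1 k r (by simpa using hr)) (hb0 r k)
    | false =>
        have : (1 : ℤ) = 0 + 1 := by ring
        rw [this]; exact afil_mul hA (ha0 k r) (hb1 r k (by simpa using hr))
  · cases s with
    | true =>
        have : (1 : ℤ) = 0 + 1 := by ring
        rw [this]; exact afil_mul hA (ha0 k r) (hb1 r k (by simpa using hr))
    | false =>
        have : (1 : ℤ) = 1 + 0 := by ring
        rw [this]; exact afil_mul hA (ha1 k r (by simpa using hr)) (hb0 r k)

lemma mset_mul (hA : IsSkewLaurent τ ι t) {s : Bool} {n : ℕ}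
    {a b : Matrix (Fin n) (Fin n) A} (ha : a ∈ Mset ι t s n) (hb : b ∈ Mset ι t s n) :
    a * b ∈ Mset ι t s n := by
  obtain ⟨ha0, ha1, had⟩ := ha
  obtain ⟨hb0, hb1, hbd⟩ := hb
  refine ⟨fun k l => ?_, fun k l h => ?_, fun k => ?_⟩
  · rw [Matrix.mul_apply]
    refine AddSubgroup.sum_mem _ fun r _ => ?_
    have : (0 : ℤ) = 0 + 0 := by ring
    rw [this]; exact afil_mul hA (ha0 k r) (hb0 r l)
  · rw [Matrix.mul_apply]
    exact AddSubgroup.sum_mem _ fun r _ =>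
      mset_term_strict hA ⟨ha0, ha1, had⟩ ⟨hb0, hb1, hbd⟩ h r
  · rw [Matrix.mul_apply]
    classical
    rw [← Finset.sum_erase_add _ _ (Finset.mem_univ k)]
    have h1 : a k k * b k k - 1 = (a k k - 1) * b k k + (b k k - 1) := by noncomm_ring
    have h2 : (∑ r ∈ Finset.univ.erase k, a k r * b r k) + a k k * b k k - 1
        = (∑ r ∈ Finset.univ.erase k, a k r * b r k) + (a k k * b k k - 1) := by
      rw [add_sub_assoc]
    rw [h2, h1]
    refine add_mem (AddSubgroup.sum_mem _ fun r hr => ?_)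
      (add_mem ?_ (hbd k))
    · exact mset_term_offdiag hA ⟨ha0, ha1, had⟩ ⟨hb0, hb1, hbd⟩ (Finset.ne_of_mem_erase hr)
    · have : (1 : ℤ) = 1 + 0 := by ring
      rw [this]; exact afil_mul hA (had k) (hb0 k k)


lemma phi_hom (hA : IsSkewLaurent τ ι t) {s : Bool} {n : ℕ} {p q : Fin n} (hpq : p ≠ q) {ℓ : ℤ}
    (H1 : ∀ g ∈ Mset ι t s n, g p q ∈ Afil ι t s ℓ)
    (H2 : ∀ r : Fin n, r ≠ p → r ≠ q → ∀ a ∈ Mset ι t s n, ∀ b ∈ Mset ι t s n,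
      a p r * b r q ∈ Afil ι t s (ℓ + 1))
    {a b : Matrix (Fin n) (Fin n) A} (ha : a ∈ Mset ι t s n) (hb : b ∈ Mset ι t s n) :
    coeffE hA ((a * b) p q) (if s then ℓ else -ℓ)
      = coeffE hA (a p q) (if s then ℓ else -ℓ) + coeffE hA (b p q) (if s then ℓ else -ℓ) := by
  classical
  set c : ℤ := if s then ℓ else -ℓ with hc
  have hnd : ¬ dok s (ℓ + 1) c := by rw [hc]; exact not_dok
  have key : ∀ r : Fin n, coeffE hA (a p r * b r q) c =
      (if r = p then coeffE hA (b p q) c else 0) + (if r = q then coeffE hA (a p q) c else 0) := by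
    intro r
    by_cases hrp : r = p
    · subst hrp
      have hrq : ¬ (r = q) := hpq
      rw [if_pos rfl, if_neg hrq, add_zero]
      have hdecomp : a r r * b r q = b r q + (a r r - 1) * b r q := by noncomm_ring
      rw [hdecomp, map_add, Finsupp.add_apply]
      have hz : coeffE hA ((a r r - 1) * b r q) c = 0 := by
        refine afil_coeff_eq_zero hA ?_ hnd
        have : (ℓ + 1 : ℤ) = 1 + ℓ := by ring
        rw [this]
        exact afil_mul hA (ha.2.2 r) (H1 b hb)
      rw [hz, add_zero]
    · by_cases hrq : r = q
      · subst hrq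
        rw [if_neg hrp, if_pos rfl, zero_add]
        have hdecomp : a p r * b r r = a p r + a p r * (b r r - 1) := by noncomm_ring
        rw [hdecomp, map_add, Finsupp.add_apply]
        have hz : coeffE hA (a p r * (b r r - 1)) c = 0 := by
          refine afil_coeff_eq_zero hA ?_ hnd
          exact afil_mul hA (H1 a ha) (hb.2.2 r)
        rw [hz, add_zero]
      · rw [if_neg hrp, if_neg hrq, add_zero]
        exact afil_coeff_eq_zero hA (H2 r hrp hrq a ha b hb) hnd
  rw [Matrix.mul_apply]
  rw [map_sum (coeffE hA) _ Finset.univ]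
  rw [Finsupp.finset_sum_apply]
  rw [Finset.sum_congr rfl fun r _ => key r]
  rw [Finset.sum_add_distrib]
  rw [Finset.sum_ite_eq' Finset.univ p fun _ => coeffE hA (b p q) c]
  rw [Finset.sum_ite_eq' Finset.univ q fun _ => coeffE hA (a p q) c]
  simp [add_comm]




variable {n : ℕ}

lemma stdBM_neg (i j : Fin n) (c : A) :
    Matrix.single i j (-c) = - Matrix.single i j c := by
  have h := Matrix.single_add i j (-c) c
  rw [neg_add_cancel, Matrix.single_zero] at h
  exact eq_neg_of_add_eq_zero_left h.symm

lemma elemUnit_mul (i j : Fin n) (hij : i ≠ j) (c d : A) :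
    elemUnit i j hij c * elemUnit i j hij d = elemUnit i j hij (c + d) := by
  apply Units.ext
  show (1 + Matrix.single i j c) * (1 + Matrix.single i j d)
      = 1 + Matrix.single i j (c + d)
  have h : Matrix.single i j c * Matrix.single i j d = 0 :=
    Matrix.single_mul_single_of_ne (c := c) i j i hij.symm d
  simp only [mul_add, add_mul, mul_one, one_mul, h, Matrix.single_add, add_zero]
  abel

lemma elemUnit_zero (i j : Fin n) (hij : i ≠ j) : elemUnit i j hij (0 : A) = 1 := by
  apply Units.ext
  show 1 + Matrix.single i j (0 : A) = 1
  rw [Matrix.single_zero, add_zero]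

lemma elemUnit_inv (i j : Fin n) (hij : i ≠ j) (c : A) :
    (elemUnit i j hij c)⁻¹ = elemUnit i j hij (-c) := by
  rw [eq_comm, eq_inv_iff_mul_eq_one, elemUnit_mul, neg_add_cancel, elemUnit_zero]

lemma elemUnit_val_apply (i j : Fin n) (hij : i ≠ j) (c : A) (k l : Fin n) :
    (elemUnit i j hij c).val k l
      = (if k = l then 1 else 0) + (if i = k ∧ j = l then c else 0) := by
  show ((1 : Matrix (Fin n) (Fin n) A) + Matrix.single i j c) k l = _
  rw [Matrix.add_apply, Matrix.one_apply]
  simp [Matrix.single]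

/-- The scalar entry of `xRoot`. -/
def cEnt (ι : D →+* A) (t : Aˣ) (i j : Fin n) (m : ℤ) (f : D) : A :=
  if i < j then ι f * ((t ^ m : Aˣ) : A) else ((t ^ m : Aˣ) : A) * ι f

lemma xRoot_eq (i j : Fin n) (hij : i ≠ j) (m : ℤ) (f : D) :
    xRoot ι t i j hij m f = elemUnit i j hij (cEnt ι t i j m f) := by
  by_cases h : i < j <;> simp [xRoot, cEnt, h]

lemma cEnt_add (i j : Fin n) (m : ℤ) (f g : D) :
    cEnt ι t i j m f + cEnt ι t i j m g = cEnt ι t i j m (f + g) := by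
  by_cases h : i < j <;> simp [cEnt, h, map_add, add_mul, mul_add]

lemma cEnt_neg (i j : Fin n) (m : ℤ) (f : D) :
    cEnt ι t i j m (-f) = - cEnt ι t i j m f := by
  by_cases h : i < j <;> simp [cEnt, h, map_neg]

lemma cEnt_zero (i j : Fin n) (m : ℤ) : cEnt ι t i j m (0 : D) = 0 := by
  by_cases h : i < j <;> simp [cEnt, h]

lemma xRoot_mul (i j : Fin n) (hij : i ≠ j) (m : ℤ) (f g : D) :
    xRoot ι t i j hij m f * xRoot ι t i j hij m g = xRoot ι t i j hij m (f + g) := by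
  rw [xRoot_eq, xRoot_eq, xRoot_eq, elemUnit_mul, cEnt_add]

lemma xRoot_zero (i j : Fin n) (hij : i ≠ j) (m : ℤ) :
    xRoot ι t i j hij m (0 : D) = 1 := by
  rw [xRoot_eq, cEnt_zero, elemUnit_zero]

lemma xRoot_inv (i j : Fin n) (hij : i ≠ j) (m : ℤ) (f : D) :
    (xRoot ι t i j hij m f)⁻¹ = xRoot ι t i j hij m (-f) := by
  rw [xRoot_eq, xRoot_eq, elemUnit_inv, cEnt_neg]

lemma xRoot_val_apply (i j : Fin n) (hij : i ≠ j) (m : ℤ) (f : D) {p q : Fin n} (hpq : p ≠ q) :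
    (xRoot ι t i j hij m f).val p q
      = if i = p ∧ j = q then cEnt ι t i j m f else 0 := by
  rw [xRoot_eq, elemUnit_val_apply, if_neg hpq, zero_add]

lemma coeffE_cEnt_ne (hA : IsSkewLaurent τ ι t) (i j : Fin n) (m : ℤ) (f : D) {c : ℤ}
    (hc : m ≠ c) : coeffE hA (cEnt ι t i j m f) c = 0 := by
  unfold cEnt
  split
  · rw [coeffE_basis hA, Finsupp.single_apply, if_neg hc]
  · rw [tpow_mul_iota hA, coeffE_basis hA, Finsupp.single_apply, if_neg hc]

lemma coeffE_cEnt_self (hA : IsSkewLaurent τ ι t) (i j : Fin n) (m : ℤ) (f : D) :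
    coeffE hA (cEnt ι t i j m f) m
      = if i < j then f else (τ ^ m : D ≃+* D) f := by
  by_cases h : i < j
  · unfold cEnt; rw [if_pos h, if_pos h, coeff_basis_self hA]
  · unfold cEnt; rw [if_neg h, if_neg h, coeff_basis_self' hA]


lemma onePlusStd_apply (i j : Fin n) (c : A) (k l : Fin n) :
    ((1 : Matrix (Fin n) (Fin n) A) + Matrix.single i j c) k l
      = (if k = l then 1 else 0) + (if i = k ∧ j = l then c else 0) := by
  rw [Matrix.add_apply, Matrix.one_apply]
  simp [Matrix.single]

lemma cEnt_mem_afil0 {s : Bool} {i j : Fin n} {m : ℤ}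
    (haff : if s then AffPos i j m else AffNeg i j m) (hA : IsSkewLaurent τ ι t) (f : D) :
    cEnt ι t i j m f ∈ Afil ι t s 0 := by
  by_cases h : i < j
  · unfold cEnt; rw [if_pos h]
    refine basis_mem_afil ?_ f
    cases s with
    | true =>
        simp only [if_true] at haff ⊢
        rcases haff with ⟨-, hm⟩ | ⟨hj, -⟩
        · exact hm
        · exact absurd h (asymm hj)
    | false =>
        simp at haff ⊢
        rcases haff with ⟨-, hm⟩ | ⟨hj, -⟩
        · show m ≤ -0; omega
        · exact absurd h (asymm hj)
  · unfold cEnt; rw [if_neg h]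
    refine basis_mem_afil' hA ?_ f
    cases s with
    | true =>
        simp at haff ⊢
        rcases haff with ⟨hij, -⟩ | ⟨-, hm⟩
        · exact absurd hij h
        · show (0:ℤ) ≤ m; omega
    | false =>
        simp at haff ⊢
        rcases haff with ⟨hij, -⟩ | ⟨-, hm⟩
        · exact absurd hij h
        · show m ≤ -0; omega

lemma cEnt_mem_afil1 {s : Bool} {i j : Fin n} {m : ℤ}
    (haff : if s then AffPos i j m else AffNeg i j m) (hA : IsSkewLaurent τ ι t) (f : D)
    (hstrict : if s then j < i else i < j) :
    cEnt ι t i j m f ∈ Afil ι t s 1 := by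
  cases s with
  | true =>
      simp at haff hstrict
      have h : ¬ i < j := asymm hstrict
      unfold cEnt; rw [if_neg h]
      refine basis_mem_afil' hA ?_ f
      rcases haff with ⟨hij, -⟩ | ⟨-, hm⟩
      · exact absurd hij h
      · show (1 : ℤ) ≤ m; omega
  | false =>
      simp at haff hstrict
      unfold cEnt; rw [if_pos hstrict]
      refine basis_mem_afil ?_ f
      rcases haff with ⟨-, hm⟩ | ⟨hj, -⟩
      · show m ≤ -1; omega
      · exact absurd hstrict (asymm hj)

lemma onePlusStd_mem_mset {s : Bool} {i j : Fin n} (hij : i ≠ j) {c : A}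
    (h0 : c ∈ Afil ι t s 0) (h1 : (if s then j < i else i < j) → c ∈ Afil ι t s 1) :
    (1 : Matrix (Fin n) (Fin n) A) + Matrix.single i j c ∈ Mset ι t s n := by
  refine ⟨fun k l => ?_, fun k l h => ?_, fun k => ?_⟩
  · rw [onePlusStd_apply]
    refine add_mem ?_ ?_
    · split
      · exact one_mem_afil le_rfl
      · exact zero_mem _
    · split
      · exact h0
      · exact zero_mem _
  · have hkl : k ≠ l := by
      cases s
      · simp at h; exact ne_of_lt h
      · simp at h; exact ne_of_gt h
    rw [onePlusStd_apply, if_neg hkl, zero_add]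
    by_cases he : i = k ∧ j = l
    · rw [if_pos he]
      refine h1 ?_
      obtain ⟨rfl, rfl⟩ := he
      exact h
    · rw [if_neg he]; exact zero_mem _
  · rw [onePlusStd_apply, if_pos rfl]
    have he : ¬ (i = k ∧ j = k) := fun ⟨h1', h2'⟩ => hij (h1'.trans h2'.symm)
    rw [if_neg he, add_zero, sub_self]
    exact zero_mem _

lemma xRoot_val_mem_mset {s : Bool} {i j : Fin n} (hij : i ≠ j) {m : ℤ}
    (haff : if s then AffPos i j m else AffNeg i j m) (hA : IsSkewLaurent τ ι t) (f : D) :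
    (xRoot ι t i j hij m f).val ∈ Mset ι t s n := by
  rw [xRoot_eq]
  exact onePlusStd_mem_mset hij (cEnt_mem_afil0 haff hA f) (cEnt_mem_afil1 haff hA f)

lemma xRoot_inv_mem_mset {s : Bool} {i j : Fin n} (hij : i ≠ j) {m : ℤ}
    (haff : if s then AffPos i j m else AffNeg i j m) (hA : IsSkewLaurent τ ι t) (f : D) :
    (xRoot ι t i j hij m f).inv ∈ Mset ι t s n := by
  have : (xRoot ι t i j hij m f).inv = (xRoot ι t i j hij m (-f)).val := by
    rw [← xRoot_inv]; rfl
  rw [this]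
  exact xRoot_val_mem_mset hij haff hA (-f)

lemma phi_xRoot_ne (hA : IsSkewLaurent τ ι t) {p q : Fin n} (hpq : p ≠ q)
    (k l : Fin n) (hkl : k ≠ l) (m' : ℤ) (f : D) {c : ℤ} (h : ¬(k = p ∧ l = q ∧ m' = c)) :
    coeffE hA ((xRoot ι t k l hkl m' f).val p q) c = 0 := by
  rw [xRoot_val_apply k l hkl m' f hpq]
  by_cases hkq : k = p ∧ l = q
  · rw [if_pos hkq]
    exact coeffE_cEnt_ne hA k l m' f (fun hm => h ⟨hkq.1, hkq.2, hm⟩)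
  · rw [if_neg hkq]; simp

lemma phi_xRoot_self (hA : IsSkewLaurent τ ι t) {p q : Fin n} (hpq : p ≠ q) (μ : ℤ) (f : D) :
    coeffE hA ((xRoot ι t p q hpq μ f).val p q) μ
      = if p < q then f else (τ ^ μ : D ≃+* D) f := by
  rw [xRoot_val_apply p q hpq μ f hpq, if_pos ⟨rfl, rfl⟩, coeffE_cEnt_self hA]

/-- The kernel subgroup. -/
def Kgrp (hA : IsSkewLaurent τ ι t) (s : Bool) {n : ℕ} (p q : Fin n) (hpq : p ≠ q) (ℓ : ℤ)
    (H1 : ∀ g ∈ Mset ι t s n, g p q ∈ Afil ι t s ℓ)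
    (H2 : ∀ r : Fin n, r ≠ p → r ≠ q → ∀ a ∈ Mset ι t s n, ∀ b ∈ Mset ι t s n,
      a p r * b r q ∈ Afil ι t s (ℓ + 1)) :
    Subgroup (Matrix (Fin n) (Fin n) A)ˣ where
  carrier := {g | g.val ∈ Mset ι t s n ∧ g.inv ∈ Mset ι t s n ∧
    coeffE hA (g.val p q) (if s then ℓ else -ℓ) = 0}
  one_mem' := by
    refine ⟨mset_one, mset_one, ?_⟩
    have : ((1 : (Matrix (Fin n) (Fin n) A)ˣ)).val p q = 0 := by
      rw [Units.val_one, Matrix.one_apply_ne hpq]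
    rw [this, map_zero]
    rfl
  mul_mem' := by
    rintro a b ⟨ha1, ha2, ha3⟩ ⟨hb1, hb2, hb3⟩
    refine ⟨mset_mul hA ha1 hb1, mset_mul hA hb2 ha2, ?_⟩
    have : ((a * b).val) = a.val * b.val := rfl
    rw [this, phi_hom hA hpq H1 H2 ha1 hb1, ha3, hb3, add_zero]
  inv_mem' := by
    rintro a ⟨ha1, ha2, ha3⟩
    refine ⟨ha2, ha1, ?_⟩
    have h := phi_hom hA hpq H1 H2 ha1 ha2
    rw [a.val_inv] at h
    have h1 : coeffE hA ((1 : Matrix (Fin n) (Fin n) A) p q) (if s then ℓ else -ℓ) = 0 := by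
      rw [Matrix.one_apply_ne hpq, map_zero]; rfl
    rw [h1, ha3, zero_add] at h
    exact h.symm


lemma afil_mul' (hA : IsSkewLaurent τ ι t) {s : Bool} {p q r : ℤ} {x y : A}
    (h : p + q = r) (hx : x ∈ Afil ι t s p) (hy : y ∈ Afil ι t s q) :
    x * y ∈ Afil ι t s r := h ▸ afil_mul hA hx hy

lemma mem_Kgrp_iff (hA : IsSkewLaurent τ ι t) (s : Bool) {n : ℕ} (p q : Fin n) (hpq : p ≠ q)
    (ℓ : ℤ) (H1 : ∀ g ∈ Mset ι t s n, g p q ∈ Afil ι t s ℓ)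
    (H2 : ∀ r : Fin n, r ≠ p → r ≠ q → ∀ a ∈ Mset ι t s n, ∀ b ∈ Mset ι t s n,
      a p r * b r q ∈ Afil ι t s (ℓ + 1)) (g : (Matrix (Fin n) (Fin n) A)ˣ) :
    g ∈ Kgrp hA s p q hpq ℓ H1 H2 ↔ (g.val ∈ Mset ι t s n ∧ g.inv ∈ Mset ι t s n ∧
      coeffE hA (g.val p q) (if s then ℓ else -ℓ) = 0) := Iff.rfl

open scoped Pointwise in
lemma master (hA : IsSkewLaurent τ ι t) {n : ℕ} (s : Bool) (p q : Fin n) (hpq : p ≠ q)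
    (μ ℓ : ℤ) (hcidx : (if s then ℓ else -ℓ) = μ)
    (haff : if s then AffPos p q μ else AffNeg p q μ)
    (H1 : ∀ g ∈ Mset ι t s n, g p q ∈ Afil ι t s ℓ)
    (H2 : ∀ r : Fin n, r ≠ p → r ≠ q → ∀ a ∈ Mset ι t s n, ∀ b ∈ Mset ι t s n,
      a p r * b r q ∈ Afil ι t s (ℓ + 1)) :
    (∀ f : D, ∀ x ∈ Uprime ι t p q hpq μ s,
        xRoot ι t p q hpq μ f * x * (xRoot ι t p q hpq μ f)⁻¹ ∈ Uprime ι t p q hpq μ s) ∧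
      (Uprime ι t p q hpq μ s : Set (Matrix (Fin n) (Fin n) A)ˣ) ∩ UrootSet ι t p q hpq μ
        = {1} ∧
      (Uprime ι t p q hpq μ s : Set (Matrix (Fin n) (Fin n) A)ˣ) * UrootSet ι t p q hpq μ
        = (Ugrp ι t n s : Set (Matrix (Fin n) (Fin n) A)ˣ) := by
  -- Part 1 : normality
  have hnorm : ∀ f : D, ∀ x ∈ Uprime ι t p q hpq μ s,
      xRoot ι t p q hpq μ f * x * (xRoot ι t p q hpq μ f)⁻¹ ∈ Uprime ι t p q hpq μ s := by
    intro f x hx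
    induction hx using Subgroup.closure_induction with
    | mem y hy =>
        obtain ⟨g, f', k, l, hkl, m', hcond, hne, rfl⟩ := hy
        have key : xRoot ι t p q hpq μ f *
              (xRoot ι t p q hpq μ g * xRoot ι t k l hkl m' f' * (xRoot ι t p q hpq μ g)⁻¹) *
              (xRoot ι t p q hpq μ f)⁻¹
            = (xRoot ι t p q hpq μ f * xRoot ι t p q hpq μ g) * xRoot ι t k l hkl m' f' *
              (xRoot ι t p q hpq μ f * xRoot ι t p q hpq μ g)⁻¹ := by
          group
        rw [key, xRoot_mul]
        exact Subgroup.subset_closure ⟨f + g, f', k, l, hkl, m', hcond, hne, rfl⟩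
    | one =>
        have : xRoot ι t p q hpq μ f * 1 * (xRoot ι t p q hpq μ f)⁻¹ = 1 := by group
        rw [this]; exact one_mem _
    | mul y z hy hz ihy ihz =>
        have : xRoot ι t p q hpq μ f * (y * z) * (xRoot ι t p q hpq μ f)⁻¹
            = (xRoot ι t p q hpq μ f * y * (xRoot ι t p q hpq μ f)⁻¹) *
              (xRoot ι t p q hpq μ f * z * (xRoot ι t p q hpq μ f)⁻¹) := by group
        rw [this]; exact mul_mem ihy ihz
    | inv y hy ihy =>
        have : xRoot ι t p q hpq μ f * y⁻¹ * (xRoot ι t p q hpq μ f)⁻¹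
            = (xRoot ι t p q hpq μ f * y * (xRoot ι t p q hpq μ f)⁻¹)⁻¹ := by group
        rw [this]; exact inv_mem ihy
  refine ⟨hnorm, ?_, ?_⟩
  -- Part 2 : trivial intersection
  · have hUK : Uprime ι t p q hpq μ s ≤ Kgrp hA s p q hpq ℓ H1 H2 := by
      apply (Subgroup.closure_le _).mpr
      rintro y ⟨g, f', k, l, hkl, m', hcond, hne, rfl⟩
      rw [SetLike.mem_coe, mem_Kgrp_iff]
      set a := xRoot ι t p q hpq μ g with ha
      set b := xRoot ι t k l hkl m' f' with hb
      have hainv : a⁻¹ = xRoot ι t p q hpq μ (-g) := xRoot_inv p q hpq μ g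
      have hav : a.val ∈ Mset ι t s n := xRoot_val_mem_mset hpq haff hA g
      have hbv : b.val ∈ Mset ι t s n := xRoot_val_mem_mset hkl hcond hA f'
      have hcv : (a⁻¹).val ∈ Mset ι t s n := by
        rw [hainv]; exact xRoot_val_mem_mset hpq haff hA (-g)
      refine ⟨?_, ?_, ?_⟩
      · exact mset_mul hA (mset_mul hA hav hbv) hcv
      · have hinv : (a * b * a⁻¹)⁻¹ = a * xRoot ι t k l hkl m' (-f') * a⁻¹ := by
          rw [← xRoot_inv, ← hb]; group
        have : (a * b * a⁻¹).inv = ((a * b * a⁻¹)⁻¹).val := rfl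
        rw [this, hinv]
        exact mset_mul hA (mset_mul hA hav
          (xRoot_val_mem_mset hkl hcond hA (-f'))) hcv
      · have hval : ((a * b * a⁻¹).val) = (a.val * b.val) * (a⁻¹).val := rfl
        rw [hval]
        rw [phi_hom hA hpq H1 H2 (mset_mul hA hav hbv) hcv]
        rw [phi_hom hA hpq H1 H2 hav hbv]
        rw [hcidx]
        rw [phi_xRoot_self hA hpq μ g]
        have h2 : coeffE hA (b.val p q) μ = 0 := by
          rw [hb]
          exact phi_xRoot_ne hA hpq k l hkl m' f' hne
        have h3 : coeffE hA ((a⁻¹).val p q) μ = if p < q then -g else (τ ^ μ : D ≃+* D) (-g) := by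
          rw [hainv]; exact phi_xRoot_self hA hpq μ (-g)
        rw [h2, h3]
        split <;> simp
    apply Set.eq_singleton_iff_unique_mem.mpr
    constructor
    · exact ⟨one_mem _, 0, (xRoot_zero p q hpq μ).symm⟩
    · rintro z ⟨hz1, f, rfl⟩
      have hK := hUK hz1
      rw [mem_Kgrp_iff] at hK
      have hphi := hK.2.2
      rw [hcidx, phi_xRoot_self hA hpq μ f] at hphi
      have hf : f = 0 := by
        by_cases h : p < q
        · rw [if_pos h] at hphi; exact hphi
        · rw [if_neg h] at hphi
          exact (τ ^ μ : D ≃+* D).injective (by rw [hphi, map_zero])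
      rw [hf, xRoot_zero]
  -- Part 3 : product decomposition
  · have hUpU : Uprime ι t p q hpq μ s ≤ Ugrp ι t n s := by
      apply (Subgroup.closure_le _).mpr
      rintro y ⟨g, f', k, l, hkl, m', hcond, hne, rfl⟩
      have ha : xRoot ι t p q hpq μ g ∈ Ugrp ι t n s :=
        Subgroup.subset_closure ⟨p, q, hpq, μ, g, haff, rfl⟩
      have hb : xRoot ι t k l hkl m' f' ∈ Ugrp ι t n s :=
        Subgroup.subset_closure ⟨k, l, hkl, m', f', hcond, rfl⟩
      exact mul_mem (mul_mem ha hb) (inv_mem ha)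
    apply Set.Subset.antisymm
    · rintro z ⟨u, hu, v, ⟨f, rfl⟩, rfl⟩
      exact mul_mem (hUpU hu) (Subgroup.subset_closure ⟨p, q, hpq, μ, f, haff, rfl⟩)
    · intro z hz
      rw [SetLike.mem_coe] at hz
      induction hz using Subgroup.closure_induction with
      | mem y hy =>
          obtain ⟨k, l, hkl, m', f, hcond, rfl⟩ := hy
          by_cases hcase : k = p ∧ l = q ∧ m' = μ
          · obtain ⟨rfl, rfl, rfl⟩ := hcase
            exact ⟨1, one_mem _, xRoot ι t k l hkl m' f, ⟨f, rfl⟩, one_mul _⟩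
          · refine ⟨xRoot ι t k l hkl m' f, ?_, 1, ⟨0, (xRoot_zero p q hpq μ).symm⟩, mul_one _⟩
            apply Subgroup.subset_closure
            refine ⟨0, f, k, l, hkl, m', hcond, hcase, ?_⟩
            rw [xRoot_zero, one_mul, inv_one, mul_one]
      | one => exact ⟨1, one_mem _, 1, ⟨0, (xRoot_zero p q hpq μ).symm⟩, mul_one _⟩
      | mul y z' hy hz' ihy ihz' =>
          obtain ⟨h₁, hh₁, x₁, ⟨f₁, rfl⟩, rfl⟩ := ihy
          obtain ⟨h₂, hh₂, x₂, ⟨f₂, rfl⟩, rfl⟩ := ihz'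
          refine ⟨h₁ * (xRoot ι t p q hpq μ f₁ * h₂ * (xRoot ι t p q hpq μ f₁)⁻¹),
            mul_mem hh₁ (hnorm f₁ h₂ hh₂), xRoot ι t p q hpq μ (f₁ + f₂),
            ⟨f₁ + f₂, rfl⟩, ?_⟩
          rw [← xRoot_mul]; group
      | inv y hy ihy =>
          obtain ⟨h, hh, x, ⟨f, rfl⟩, rfl⟩ := ihy
          refine ⟨xRoot ι t p q hpq μ (-f) * h⁻¹ * (xRoot ι t p q hpq μ (-f))⁻¹,
            hnorm (-f) h⁻¹ (inv_mem hh), xRoot ι t p q hpq μ (-f), ⟨-f, rfl⟩, ?_⟩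
          rw [mul_inv_rev, xRoot_inv p q hpq μ f]; group

end Aux

open scoped Pointwise in
/-- For every `α̇ ∈ Π_a`, `U^± = U'_{±α̇} ⋊ U_{±α̇}`:
`U_{±α̇}` normalizes `U'_{±α̇}`, `U'_{±α̇} ∩ U_{±α̇} = {I}`, and `U'_{±α̇}·U_{±α̇} = U^±`. -/
theorem statement_6 (n : ℕ) (hn : 2 ≤ n) {D A : Type} [DivisionRing D] [Ring A]
    (τ : D ≃+* D) (ι : D →+* A) (t : Aˣ) (hA : IsSkewLaurent τ ι t)
    (i j : Fin n) (hij : i ≠ j) (m : ℤ) (hα : SimpleAff n i j m) :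
    ((∀ f : D, ∀ x ∈ Uprime ι t i j hij m true,
        xRoot ι t i j hij m f * x * (xRoot ι t i j hij m f)⁻¹ ∈ Uprime ι t i j hij m true) ∧
      (Uprime ι t i j hij m true : Set (Matrix (Fin n) (Fin n) A)ˣ) ∩ UrootSet ι t i j hij m
        = {1} ∧
      (Uprime ι t i j hij m true : Set (Matrix (Fin n) (Fin n) A)ˣ) * UrootSet ι t i j hij m
        = (Ugrp ι t n true : Set (Matrix (Fin n) (Fin n) A)ˣ)) ∧
    ((∀ f : D, ∀ x ∈ Uprime ι t j i hij.symm (-m) false,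
        xRoot ι t j i hij.symm (-m) f * x * (xRoot ι t j i hij.symm (-m) f)⁻¹
          ∈ Uprime ι t j i hij.symm (-m) false) ∧
      (Uprime ι t j i hij.symm (-m) false : Set (Matrix (Fin n) (Fin n) A)ˣ)
          ∩ UrootSet ι t j i hij.symm (-m) = {1} ∧
      (Uprime ι t j i hij.symm (-m) false : Set (Matrix (Fin n) (Fin n) A)ˣ)
          * UrootSet ι t j i hij.symm (-m)
        = (Ugrp ι t n false : Set (Matrix (Fin n) (Fin n) A)ˣ)) := by
  have hiv : ∀ (a b : Fin n), a ≠ b → (a : ℕ) ≠ (b : ℕ) :=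
    fun a b h hv => h (Fin.val_injective hv)
  rcases hα with ⟨hj, hm⟩ | ⟨hi, hj, hm⟩
  · -- classical simple root
    subst hm
    have hij' : i < j := Fin.lt_def.mpr (by omega)
    constructor
    · refine master hA true i j hij 0 0 rfl (Or.inl ⟨hij', le_rfl⟩)
        (fun g hg => hg.1 i j) ?_
      intro r hrp hrq a ha b hb
      have h1 : (r : ℕ) ≠ (i : ℕ) := hiv r i hrp
      have h2 : (r : ℕ) ≠ (j : ℕ) := hiv r j hrq
      rcases (by omega : (r : ℕ) < (i : ℕ) ∨ (j : ℕ) < (r : ℕ)) with hc | hc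
      · exact afil_mul' hA (by norm_num) (ha.2.1 i r (Fin.lt_def.mpr hc)) (hb.1 r j)
      · exact afil_mul' hA (by norm_num) (ha.1 i r) (hb.2.1 r j (Fin.lt_def.mpr hc))
    · refine master hA false j i hij.symm (-0) 0 rfl (Or.inr ⟨hij', by norm_num⟩)
        (fun g hg => hg.1 j i) ?_
      intro r hrp hrq a ha b hb
      have h1 : (r : ℕ) ≠ (j : ℕ) := hiv r j hrp
      have h2 : (r : ℕ) ≠ (i : ℕ) := hiv r i hrq
      rcases (by omega : (r : ℕ) < (i : ℕ) ∨ (j : ℕ) < (r : ℕ)) with hc | hc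
      · exact afil_mul' hA (by norm_num) (ha.1 j r) (hb.2.1 r i (Fin.lt_def.mpr hc))
      · exact afil_mul' hA (by norm_num) (ha.2.1 j r (Fin.lt_def.mpr hc)) (hb.1 r i)
  · -- affine simple root
    subst hm
    have hji : j < i := Fin.lt_def.mpr (by omega)
    constructor
    · refine master hA true i j hij 1 1 rfl (Or.inr ⟨hji, by norm_num⟩)
        (fun g hg => hg.2.1 i j hji) ?_
      intro r hrp hrq a ha b hb
      have h1 : (r : ℕ) ≠ (i : ℕ) := hiv r i hrp
      have h2 : (r : ℕ) ≠ (j : ℕ) := hiv r j hrq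
      have hri : r < i := Fin.lt_def.mpr (by have := r.isLt; omega)
      have hjr : j < r := Fin.lt_def.mpr (by omega)
      exact afil_mul hA (ha.2.1 i r hri) (hb.2.1 r j hjr)
    · refine master hA false j i hij.symm (-1) 1 rfl (Or.inl ⟨hji, by norm_num⟩)
        (fun g hg => hg.2.1 j i hji) ?_
      intro r hrp hrq a ha b hb
      have h1 : (r : ℕ) ≠ (j : ℕ) := hiv r j hrp
      have h2 : (r : ℕ) ≠ (i : ℕ) := hiv r i hrq
      have hri : r < i := Fin.lt_def.mpr (by have := r.isLt; omega)
      have hjr : j < r := Fin.lt_def.mpr (by omega)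
      exact afil_mul hA (ha.2.1 j r hjr) (hb.2.1 r i hri)

end NCLaurent
end
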